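/- arXiv:2005.06559 — 2 statements merged into one kernel-verified Lean document; each statement's English description precedes it below -/
import Mathlib

section
/- In the setting of the large Ponomarev construction with 0 < H^h(C_A) < ∞, the exceptional set S = {x ∈ C_A : c_i(x) eventually constant for some i} satisfies H^h(S) = 0. -/
open Set Filter MeasureTheory
open scoped ENNReal

/-!
Flipping the `p`-th digit of the `i`-th coordinate of a point of `C_A` moves it by `± r p` along
the `i`-th axis. So if `S` is the set of points whose `i`-th digits equal `c` from level `N` on,
then for every `j` the translate of `S` obtained by flipping digit `N + j` lies in `C_A`, and these
translates are pairwise disjoint, as they disagree at digit `N + j`. All of them have the measure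
of `S` by translation invariance of the metric measure, so `μ C_A < ∞` forces `μ S = 0`.
Measurability of `S` comes from the separation of the level-`m` cubes, which makes the `m`-th
digit of a point of `C_A` readable from the cube containing it.
-/

namespace Ponomarev

section Centers

variable {ι : Type*}

/-- `closedBall (center r v) (r m)` is the cube (a sup-norm ball) of level `m` of `C_A` with
digit pattern `v`. -/
noncomputable def center (r : ℕ → ℝ) {m : ℕ} (v : Fin m → ι → ℝ) : ι → ℝ :=
  ∑ t : Fin m, (r t / 2) • v t

lemma center_succ (r : ℕ → ℝ) {m : ℕ} (v : Fin (m + 1) → ι → ℝ) :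
    center r v = center r (Fin.init v) + (r m / 2) • v (Fin.last m) := by
  simp [center, Fin.sum_univ_castSucc, Fin.init]

lemma norm_le_one_of_forall_eq_one_or_eq_neg_one [Fintype ι] {u : ι → ℝ}
    (hu : ∀ j, u j = 1 ∨ u j = -1) : ‖u‖ ≤ 1 :=
  (pi_norm_le_iff_of_nonneg zero_le_one).2 fun j => by rcases hu j with h | h <;> simp [h]

lemma mem_closedBall_center_init [Fintype ι] {r : ℕ → ℝ} {m : ℕ} {v : Fin (m + 1) → ι → ℝ}
    (hv : ‖v (Fin.last m)‖ ≤ 1) (hr0 : 0 ≤ r m) (hr : 2 * r (m + 1) ≤ r m) {x : ι → ℝ}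
    (hx : x ∈ Metric.closedBall (center r v) (r (m + 1))) :
    x ∈ Metric.closedBall (center r (Fin.init v)) (r m) := by
  have hstep : dist (center r v) (center r (Fin.init v)) ≤ r m / 2 := by
    rw [center_succ, dist_self_add_left, norm_smul, Real.norm_of_nonneg (by positivity)]
    exact mul_le_of_le_one_right (by positivity) hv
  calc dist x (center r (Fin.init v))
      ≤ dist x (center r v) + dist (center r v) (center r (Fin.init v)) := dist_triangle _ _ _
    _ ≤ r m := by linarith [Metric.mem_closedBall.1 hx]

lemma last_eq_of_init_eq [Fintype ι] {r : ℕ → ℝ} {m : ℕ} {v w : Fin (m + 1) → ι → ℝ}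
    (hinit : Fin.init v = Fin.init w) (hv : ∀ j, v (Fin.last m) j = 1 ∨ v (Fin.last m) j = -1)
    (hw : ∀ j, w (Fin.last m) j = 1 ∨ w (Fin.last m) j = -1) (hr : 2 * r (m + 1) < r m)
    {x : ι → ℝ} (hxv : x ∈ Metric.closedBall (center r v) (r (m + 1)))
    (hxw : x ∈ Metric.closedBall (center r w) (r (m + 1))) :
    v (Fin.last m) = w (Fin.last m) := by
  have hdiff : center r v - center r w = (r m / 2) • (v (Fin.last m) - w (Fin.last m)) := by
    rw [center_succ, center_succ r w, hinit, smul_sub]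
    abel
  have hnorm : ‖center r v - center r w‖ < r m := by
    rw [← dist_eq_norm]
    linarith [dist_triangle_left (center r v) (center r w) x, Metric.mem_closedBall.1 hxv,
      Metric.mem_closedBall.1 hxw]
  funext j
  have hj : |r m / 2 * (v (Fin.last m) j - w (Fin.last m) j)| < r m := by
    have := (norm_le_pi_norm _ j).trans_lt hnorm
    rwa [hdiff, Pi.smul_apply, Pi.sub_apply, smul_eq_mul, Real.norm_eq_abs] at this
  rcases hv j with h | h <;> rcases hw j with h' | h' <;> rw [h, h'] at hj ⊢ <;>
    first | rfl | (exfalso; rw [abs_lt] at hj; linarith [hj.1, hj.2])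

/-- A cube lies in the cube of its parent, and two children of one parent are disjoint because
`2 r (m + 1) < r m`; so cubes of the same level with different patterns are disjoint. -/
lemma eq_of_mem_closedBall_center [Fintype ι] {r : ℕ → ℝ} (hr0 : ∀ k, 0 ≤ r k)
    (hr : ∀ k, 2 * r (k + 1) < r k) {x : ι → ℝ} :
    ∀ {m : ℕ} {v w : Fin (m + 1) → ι → ℝ}, (∀ t j, v t j = 1 ∨ v t j = -1) →
      (∀ t j, w t j = 1 ∨ w t j = -1) → x ∈ Metric.closedBall (center r v) (r (m + 1)) →
      x ∈ Metric.closedBall (center r w) (r (m + 1)) → v = w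
  | 0, v, w, hv, hw, hxv, hxw => funext fun t => by
    rw [Fin.fin_one_eq_zero t]
    exact last_eq_of_init_eq (funext fun t => t.elim0) (hv _) (hw _) (hr 0) hxv hxw
  | m + 1, v, w, hv, hw, hxv, hxw => by
    have hinit : Fin.init v = Fin.init w :=
      eq_of_mem_closedBall_center hr0 hr (fun t => hv t.castSucc) (fun t => hw t.castSucc)
        (mem_closedBall_center_init (norm_le_one_of_forall_eq_one_or_eq_neg_one (hv _))
          (hr0 _) (hr _).le hxv)
        (mem_closedBall_center_init (norm_le_one_of_forall_eq_one_or_eq_neg_one (hw _))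
          (hr0 _) (hr _).le hxw)
    have hlast := last_eq_of_init_eq hinit (hv _) (hw _) (hr _) hxv hxw
    rw [← Fin.snoc_init_self v, ← Fin.snoc_init_self w, hinit, hlast]

lemma center_sub_center_update [DecidableEq ι] (r : ℕ → ℝ) (s : ℕ → ι → ℝ) {p K : ℕ}
    (hpK : p ≤ K) (i : ι) (c : ℝ) :
    center r (fun t : Fin (K + 1) => s t) -
        center r (fun t : Fin (K + 1) => Function.update s p (Function.update (s p) i c) t) =
      Pi.single i (r p / 2 * (s p i - c)) := by
  rw [center, center, ← Finset.sum_sub_distrib,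
    Finset.sum_eq_single_of_mem (⟨p, Nat.lt_succ_of_le hpK⟩ : Fin (K + 1)) (Finset.mem_univ _)]
  · funext j
    rcases eq_or_ne j i with rfl | hji <;> simp [*, mul_sub]
  · intro t _ ht
    rw [Function.update_of_ne (fun h => ht (Fin.ext h)), sub_self]

end Centers

lemma finite_setOf_forall_eq_one_or_eq_neg_one {κ ι : Type*} [Finite κ] [Finite ι] :
    {v : κ → ι → ℝ | ∀ t j, v t j = 1 ∨ v t j = -1}.Finite :=
  (Set.Finite.pi fun _ => Set.Finite.pi fun _ => (Set.finite_singleton (-1 : ℝ)).insert 1).subset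
    fun v hv => by simpa [Set.mem_pi] using hv

lemma measure_eq_zero_of_pairwise_disjoint_copies {α : Type*} [MeasurableSpace α]
    {μ : Measure α} {s A : Set α} {F : ℕ → Set α} (hF : ∀ j, μ (F j) = μ s)
    (hFm : ∀ j, MeasurableSet (F j)) (hdisj : Pairwise (Function.onFun Disjoint F))
    (hFA : ∀ j, F j ⊆ A) (hA : μ A ≠ ∞) : μ s = 0 := by
  by_contra hs
  refine hA (top_unique ?_)
  calc ∞ = ∑' j, μ (F j) := by simp_rw [hF]; exact (ENNReal.tsum_const_eq_top_of_ne_zero hs).symm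
    _ = μ (⋃ j, F j) := (measure_iUnion hdisj hFm).symm
    _ ≤ μ A := measure_mono (iUnion_subset hFA)

lemma mkMetric_preimage_add_right {E : Type*} [NormedAddCommGroup E] [MeasurableSpace E]
    [BorelSpace E] (m : ℝ≥0∞ → ℝ≥0∞) (g : E) (s : Set E) :
    Measure.mkMetric m ((· + g) ⁻¹' s) = Measure.mkMetric m s := by
  rw [← OuterMeasure.coe_mkMetric]
  exact DFunLike.congr_fun (OuterMeasure.isometryEquiv_map_mkMetric m (IsometryEquiv.addRight g)) s

section CantorSet

variable {n : ℕ} {r : ℕ → ℝ} {CA : Set (Fin n → ℝ)} {vx : (Fin n → ℝ) → ℕ → Fin n → ℝ}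

lemma digit_eq_iff_mem_iUnion (hr0 : ∀ k, 0 ≤ r k) (hr : ∀ k, 2 * r (k + 1) < r k)
    (hval : ∀ x ∈ CA, ∀ (j : ℕ) (i : Fin n), vx x j i = 1 ∨ vx x j i = -1)
    (hmem : ∀ x ∈ CA, ∀ k : ℕ,
      x ∈ Metric.closedBall (∑ i : Fin (k + 1), (r i / 2) • vx x i) (r (k + 1)))
    {x : Fin n → ℝ} (hx : x ∈ CA) (m : ℕ) (i : Fin n) (c : ℝ) :
    vx x m i = c ↔ x ∈ ⋃ v ∈ {v : Fin (m + 1) → Fin n → ℝ |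
      (∀ t j, v t j = 1 ∨ v t j = -1) ∧ v (Fin.last m) i = c},
        Metric.closedBall (center r v) (r (m + 1)) := by
  refine ⟨fun h => mem_biUnion ⟨fun t => hval x hx t, by simpa using h⟩ (hmem x hx m), ?_⟩
  simp only [mem_iUnion, exists_prop]
  rintro ⟨v, ⟨hv, rfl⟩, hxv⟩
  rw [eq_of_mem_closedBall_center hr0 hr hv (fun t => hval x hx t) hxv (hmem x hx m)]
  simp

lemma measurableSet_setOf_digit_eventually_eq
    (hCA : CA = ⋂ k : ℕ, ⋃ v ∈ {v : Fin (k + 1) → Fin n → ℝ | ∀ i j, v i j = 1 ∨ v i j = -1},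
      Metric.closedBall (∑ i : Fin (k + 1), (r i / 2) • v i) (r (k + 1)))
    (hr0 : ∀ k, 0 ≤ r k) (hr : ∀ k, 2 * r (k + 1) < r k)
    (hval : ∀ x ∈ CA, ∀ (j : ℕ) (i : Fin n), vx x j i = 1 ∨ vx x j i = -1)
    (hmem : ∀ x ∈ CA, ∀ k : ℕ,
      x ∈ Metric.closedBall (∑ i : Fin (k + 1), (r i / 2) • vx x i) (r (k + 1)))
    (i : Fin n) (N : ℕ) (c : ℝ) :
    MeasurableSet {x ∈ CA | ∀ m ≥ N, vx x m i = c} := by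
  have hCAm : MeasurableSet CA := hCA ▸ MeasurableSet.iInter fun k =>
    .biUnion finite_setOf_forall_eq_one_or_eq_neg_one.countable fun _ _ => measurableSet_closedBall
  have hS : {x ∈ CA | ∀ m ≥ N, vx x m i = c} = CA ∩ ⋂ m ≥ N, ⋃ v ∈ {v : Fin (m + 1) → Fin n → ℝ |
      (∀ t j, v t j = 1 ∨ v t j = -1) ∧ v (Fin.last m) i = c},
        Metric.closedBall (center r v) (r (m + 1)) := by
    ext x
    simp only [mem_sep_iff, mem_inter_iff, mem_iInter]
    exact and_congr_right fun hx => forall₂_congr fun m _ =>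
      digit_eq_iff_mem_iUnion hr0 hr hval hmem hx m i c
  rw [hS]
  exact hCAm.inter <| .iInter fun m => .iInter fun _ =>
    .biUnion (finite_setOf_forall_eq_one_or_eq_neg_one.subset fun _ hv => hv.1).countable
      fun _ _ => measurableSet_closedBall

lemma sub_single_mem_and_digits (hrlim : Tendsto r atTop (nhds 0))
    (hmem : ∀ x ∈ CA, ∀ k : ℕ,
      x ∈ Metric.closedBall (∑ i : Fin (k + 1), (r i / 2) • vx x i) (r (k + 1)))
    (huniq : ∀ s : ℕ → Fin n → ℝ, (∀ (j : ℕ) (i : Fin n), s j i = 1 ∨ s j i = -1) →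
      ∃! x, x ∈ CA ∧ vx x = s)
    {x : Fin n → ℝ} (hx : x ∈ CA) (hxval : ∀ (j : ℕ) (i : Fin n), vx x j i = 1 ∨ vx x j i = -1)
    (p : ℕ) (i : Fin n) :
    x - Pi.single i (r p * vx x p i) ∈ CA ∧ vx (x - Pi.single i (r p * vx x p i)) =
      Function.update (vx x) p (Function.update (vx x p) i (-vx x p i)) := by
  set s := Function.update (vx x) p (Function.update (vx x p) i (-vx x p i))
  have hs : ∀ (j : ℕ) (k : Fin n), s j k = 1 ∨ s j k = -1 := by
    intro j k
    rcases eq_or_ne j p with rfl | hj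
    · rcases eq_or_ne k i with rfl | hk
      · rcases hxval j k with h | h <;> simp [s, h]
      · simpa [s, hk] using hxval j k
    · simpa [s, hj] using hxval j k
  obtain ⟨z, ⟨hz, hzs⟩, -⟩ := huniq s hs
  suffices z = x - Pi.single i (r p * vx x p i) by subst this; exact ⟨hz, hzs⟩
  refine eq_of_forall_dist_le fun ε hε => ?_
  obtain ⟨K₀, hK₀⟩ := eventually_atTop.1
    ((hrlim.comp (tendsto_add_atTop_nat 1)).eventually (ge_mem_nhds (half_pos hε)))
  set K := max p K₀
  have hcenter : center r (fun t : Fin (K + 1) => s t) =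
      center r (fun t : Fin (K + 1) => vx x t) - Pi.single i (r p * vx x p i) := by
    rw [eq_sub_iff_add_eq, ← eq_sub_iff_add_eq', center_sub_center_update r (vx x)
      (le_max_left p K₀)]
    congr 1
    ring
  have hzK := hmem z hz K
  rw [hzs] at hzK
  calc dist z (x - Pi.single i (r p * vx x p i))
      ≤ dist z (center r (fun t : Fin (K + 1) => s t)) +
          dist (center r (fun t : Fin (K + 1) => vx x t)) x := by
        rw [← dist_sub_right _ x (Pi.single i _), ← hcenter]
        exact dist_triangle _ _ _
    _ ≤ r (K + 1) + r (K + 1) := add_le_add hzK (by rw [dist_comm]; exact hmem x hx K)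
    _ ≤ ε := by linarith [show r (K + 1) ≤ ε / 2 from hK₀ K (le_max_right p K₀)]

lemma preimage_add_single_subset (hrlim : Tendsto r atTop (nhds 0))
    (hval : ∀ x ∈ CA, ∀ (j : ℕ) (i : Fin n), vx x j i = 1 ∨ vx x j i = -1)
    (hmem : ∀ x ∈ CA, ∀ k : ℕ,
      x ∈ Metric.closedBall (∑ i : Fin (k + 1), (r i / 2) • vx x i) (r (k + 1)))
    (huniq : ∀ s : ℕ → Fin n → ℝ, (∀ (j : ℕ) (i : Fin n), s j i = 1 ∨ s j i = -1) →
      ∃! x, x ∈ CA ∧ vx x = s)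
    {N p : ℕ} (hp : N ≤ p) (i : Fin n) (c : ℝ) :
    (· + Pi.single i (r p * c)) ⁻¹' {x ∈ CA | ∀ m ≥ N, vx x m i = c} ⊆
      {y ∈ CA | ∀ m ≥ N, vx y m i = if m = p then -c else c} := by
  rintro y ⟨hx, hxc⟩
  obtain ⟨hy, hyd⟩ := sub_single_mem_and_digits hrlim hmem huniq hx (hval _ hx) p i
  rw [hxc p hp, add_sub_cancel_right] at hy hyd
  refine ⟨hy, fun m hm => ?_⟩
  rcases eq_or_ne m p with rfl | hmp
  · simp [hyd]
  · simp [hyd, hmp, hxc m hm]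

lemma measure_setOf_digit_eventually_eq_eq_zero {μ : Measure (Fin n → ℝ)}
    (hμ : ∀ g s, μ ((· + g) ⁻¹' s) = μ s) (hCA : μ CA ≠ ∞) (hrlim : Tendsto r atTop (nhds 0))
    (hval : ∀ x ∈ CA, ∀ (j : ℕ) (i : Fin n), vx x j i = 1 ∨ vx x j i = -1)
    (hmem : ∀ x ∈ CA, ∀ k : ℕ,
      x ∈ Metric.closedBall (∑ i : Fin (k + 1), (r i / 2) • vx x i) (r (k + 1)))
    (huniq : ∀ s : ℕ → Fin n → ℝ, (∀ (j : ℕ) (i : Fin n), s j i = 1 ∨ s j i = -1) →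
      ∃! x, x ∈ CA ∧ vx x = s)
    {i : Fin n} {N : ℕ} {c : ℝ} (hS : MeasurableSet {x ∈ CA | ∀ m ≥ N, vx x m i = c})
    (hc : c ≠ 0) : μ {x ∈ CA | ∀ m ≥ N, vx x m i = c} = 0 := by
  have hsub := fun j => preimage_add_single_subset hrlim hval hmem huniq
    (Nat.le_add_right N j) i c
  refine measure_eq_zero_of_pairwise_disjoint_copies (fun j => hμ _ _)
    (fun j => measurable_add_const _ hS) (fun j j' hjj' => ?_) (fun j => (hsub j).trans
      (sep_subset _ _)) hCA
  refine Disjoint.mono (hsub j) (hsub j') (disjoint_left.2 fun y hy hy' => hc ?_)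
  have h := hy.2 (N + j) (Nat.le_add_right N j)
  rw [hy'.2 (N + j) (Nat.le_add_right N j), if_neg (by omega), if_pos rfl] at h
  linarith

end CantorSet

end Ponomarev

theorem stmt16_general (n : ℕ)
    (h : ℝ → ℝ)
    (a : ℕ → ℝ) (hpos : ∀ k, 0 < a k)
    (hanti : StrictAnti a) (halim : Tendsto a atTop (nhds 0))
    (r : ℕ → ℝ) (hr : ∀ k, r k = a k / 2 ^ k)
    (CA : Set (Fin n → ℝ))
    (hCA : CA = ⋂ k : ℕ, ⋃ v ∈ {v : Fin (k + 1) → Fin n → ℝ | ∀ i j, v i j = 1 ∨ v i j = -1},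
      Metric.closedBall (∑ i : Fin (k + 1), (r i / 2) • v i) (r (k + 1)))
    (μH : Measure (Fin n → ℝ))
    (hμH : μH = MeasureTheory.Measure.mkMetric (fun d : ℝ≥0∞ => ENNReal.ofReal (h d.toReal)))
    (hCAfin : μH CA < ⊤)
    (vx : (Fin n → ℝ) → ℕ → Fin n → ℝ)
    (hval : ∀ x ∈ CA, ∀ (j : ℕ) (i : Fin n), vx x j i = 1 ∨ vx x j i = -1)
    (hmem : ∀ x ∈ CA, ∀ k : ℕ,
      x ∈ Metric.closedBall (∑ i : Fin (k + 1), (r i / 2) • vx x i) (r (k + 1)))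
    (huniq : ∀ s : ℕ → Fin n → ℝ, (∀ (j : ℕ) (i : Fin n), s j i = 1 ∨ s j i = -1) →
      ∃! x, x ∈ CA ∧ vx x = s) :
    μH {x ∈ CA | ∃ i : Fin n, ∃ N : ℕ, ∃ c : ℝ, ∀ m ≥ N, vx x m i = c} = 0 := by
  have hr0 : ∀ k, 0 ≤ r k := fun k => hr k ▸ (div_pos (hpos k) (by positivity)).le
  have hr2 : ∀ k, 2 * r (k + 1) < r k := fun k => by
    rw [hr, hr, pow_succ, ← div_div, mul_div_cancel₀ _ two_ne_zero]
    exact div_lt_div_of_pos_right (hanti k.lt_succ_self) (by positivity)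
  have hrlim : Tendsto r atTop (nhds 0) := squeeze_zero hr0
    (fun k => hr k ▸ div_le_self (hpos k).le (one_le_pow₀ one_le_two)) halim
  have hμ : ∀ g s, μH ((· + g) ⁻¹' s) = μH s := hμH ▸ Ponomarev.mkMetric_preimage_add_right _
  have hnull : ∀ i N c, c ≠ 0 → μH {x ∈ CA | ∀ m ≥ N, vx x m i = c} = 0 := fun i N c =>
    Ponomarev.measure_setOf_digit_eventually_eq_eq_zero hμ hCAfin.ne hrlim hval hmem huniq
      (Ponomarev.measurableSet_setOf_digit_eventually_eq hCA hr0 hr2 hval hmem i N c)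
  refine measure_mono_null (t := ⋃ i, ⋃ N, ({x ∈ CA | ∀ m ≥ N, vx x m i = 1} ∪
    {x ∈ CA | ∀ m ≥ N, vx x m i = -1})) ?_ (measure_iUnion_null fun i => measure_iUnion_null
      fun N => measure_union_null (hnull i N 1 one_ne_zero) (hnull i N (-1) (by norm_num)))
  rintro x ⟨hx, i, N, c, hc⟩
  simp only [mem_iUnion]
  refine ⟨i, N, ?_⟩
  rcases hval x hx N i with h1 | h1 <;> rw [hc N le_rfl] at h1 <;> subst h1
  exacts [.inl ⟨hx, hc⟩, .inr ⟨hx, hc⟩]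

theorem stmt16 (n : ℕ) (hn : 1 ≤ n)
    (h : ℝ → ℝ) (hcont : ContinuousOn h (Ici 0)) (hmono : MonotoneOn h (Ici 0))
    (h0 : h 0 = 0) (hnonneg : ∀ t ≥ (0:ℝ), 0 ≤ h t)
    (a : ℕ → ℝ) (hpos : ∀ k, 0 < a k) (ha0 : a 0 = 1)
    (hanti : StrictAnti a) (halim : Tendsto a atTop (nhds 0))
    (r : ℕ → ℝ) (hr : ∀ k, r k = a k / 2 ^ k)
    (CA : Set (Fin n → ℝ))
    (hCA : CA = ⋂ k : ℕ, ⋃ v ∈ {v : Fin (k + 1) → Fin n → ℝ | ∀ i j, v i j = 1 ∨ v i j = -1},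
      Metric.closedBall (∑ i : Fin (k + 1), (r i / 2) • v i) (r (k + 1)))
    (μH : Measure (Fin n → ℝ))
    (hμH : μH = MeasureTheory.Measure.mkMetric (fun d : ℝ≥0∞ => ENNReal.ofReal (h d.toReal)))
    (hCApos : 0 < μH CA) (hCAfin : μH CA < ⊤)
    (vx : (Fin n → ℝ) → ℕ → Fin n → ℝ)
    (hval : ∀ x ∈ CA, ∀ (j : ℕ) (i : Fin n), vx x j i = 1 ∨ vx x j i = -1)
    (hmem : ∀ x ∈ CA, ∀ k : ℕ,
      x ∈ Metric.closedBall (∑ i : Fin (k + 1), (r i / 2) • vx x i) (r (k + 1)))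
    (huniq : ∀ s : ℕ → Fin n → ℝ, (∀ (j : ℕ) (i : Fin n), s j i = 1 ∨ s j i = -1) →
      ∃! x, x ∈ CA ∧ vx x = s) :
    μH {x ∈ CA | ∃ i : Fin n, ∃ N : ℕ, ∃ c : ℝ, ∀ m ≥ N, vx x m i = c} = 0 :=
  stmt16_general n h a hpos hanti halim r hr CA hCA μH hμH hCAfin vx hval hmem huniq
end

section
/- Let a_k be strictly decreasing positive with a_0 = 1 and a_k → 0. Then sup_{0<ε≤n-1} ε · Σ_{k=1}^∞ 2^{nk} ∫_{2^{-k}a_k}^{2^{-k}a_{k-1}} (2^{-k-1}/t)^{n-ε} t^{n-1} dt < ∞. -/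
/-!
On each shell the integrand is a pure power: `(c / t) ^ (n - ε) * t ^ (n - 1) = c ^ (n - ε) * t ^ (ε - 1)`,
so the `k`-th summand equals `2 ^ (ε - n) / ε * (a k ^ ε - a (k + 1) ^ ε)`; the powers of two cancel
exactly. The factor `1 / ε` produced by integrating `t ^ (ε - 1)` is what the prefactor `ε` absorbs,
and the remaining series telescopes to `a 0 ^ ε = 1`. Hence the whole expression is `2 ^ (ε - n) ≤ 1`.
-/

open Set Filter Topology

theorem Antitone.hasSum_sub_succ {f : ℕ → ℝ} {L : ℝ} (hf : Antitone f)
    (hL : Tendsto f atTop (𝓝 L)) : HasSum (fun k ↦ f k - f (k + 1)) (f 0 - L) := by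
  rw [hasSum_iff_tendsto_nat_of_nonneg fun k ↦ sub_nonneg.2 (hf k.le_succ)]
  simp only [Finset.sum_range_sub']
  exact tendsto_const_nhds.sub hL

theorem div_rpow_mul_pow_eq {c t : ℝ} (p : ℝ) (m : ℕ) (hc : 0 ≤ c) (ht : 0 < t) :
    (c / t) ^ p * t ^ m = c ^ p * t ^ ((m : ℝ) - p) := by
  rw [Real.div_rpow hc ht.le, div_mul_eq_mul_div, mul_div_assoc, ← Real.rpow_natCast,
    ← Real.rpow_sub ht]

theorem integral_div_rpow_mul_pow {c x y p : ℝ} (m : ℕ) (hc : 0 ≤ c) (hx : 0 < x) (hy : 0 < y)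
    (hp : p ≠ m + 1) :
    ∫ t in x..y, (c / t) ^ p * t ^ m =
      c ^ p * ((y ^ ((m : ℝ) + 1 - p) - x ^ ((m : ℝ) + 1 - p)) / ((m : ℝ) + 1 - p)) := by
  have hpos : ∀ t ∈ uIcc x y, 0 < t := fun t ht ↦ (lt_min hx hy).trans_le ht.1
  have h0 : (0 : ℝ) ∉ uIcc x y := fun h ↦ (hpos 0 h).false
  rw [intervalIntegral.integral_congr fun t ht ↦ div_rpow_mul_pow_eq p m hc (hpos t ht),
    intervalIntegral.integral_const_mul,
    integral_rpow (Or.inr ⟨fun h ↦ hp (by linarith), h0⟩)]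
  ring_nf

theorem two_pow_mul_rpow_div_rpow (n k : ℕ) (ε : ℝ) :
    (2 : ℝ) ^ (n * (k + 1)) * ((1 / 2 ^ (k + 2)) ^ ((n : ℝ) - ε) / ((2 : ℝ) ^ (k + 1)) ^ ε) =
      2 ^ (ε - n) := by
  have h2 : (0 : ℝ) < 2 := two_pos
  rw [one_div, ← Real.rpow_natCast 2 (n * (k + 1)), ← Real.rpow_natCast 2 (k + 2),
    ← Real.rpow_natCast 2 (k + 1), ← Real.rpow_neg h2.le, ← Real.rpow_mul h2.le,
    ← Real.rpow_mul h2.le, ← mul_div_assoc, ← Real.rpow_add h2, ← Real.rpow_sub h2]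
  congr 1
  push_cast
  ring

theorem shell_integral_eq {n : ℕ} (k : ℕ) {ε x y : ℝ} (hn : 1 ≤ n) (hε : 0 < ε) (hx : 0 < x)
    (hy : 0 < y) :
    (2 : ℝ) ^ (n * (k + 1)) *
        ∫ t in (x / 2 ^ (k + 1))..(y / 2 ^ (k + 1)),
          ((1 / 2 ^ (k + 2)) / t) ^ ((n : ℝ) - ε) * t ^ (n - 1) =
      2 ^ (ε - n) / ε * (y ^ ε - x ^ ε) := by
  have hm : ((n - 1 : ℕ) : ℝ) + 1 - (n - ε) = ε := by
    rw [Nat.cast_sub hn]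
    ring
  rw [integral_div_rpow_mul_pow (n - 1) (by positivity) (by positivity) (by positivity)
      (by linarith), hm, Real.div_rpow hx.le (by positivity), Real.div_rpow hy.le (by positivity),
    ← two_pow_mul_rpow_div_rpow n k ε]
  field_simp

theorem stmt19_general (n : ℕ)
    (a : ℕ → ℝ) (hpos : ∀ k, 0 < a k) (ha0 : a 0 = 1)
    (hanti : StrictAnti a) (halim : Tendsto a atTop (nhds 0)) :
    ∃ M : ℝ, ∀ ε ∈ Ioc (0:ℝ) ((n:ℝ) - 1),
      ε * ∑' k : ℕ, (2:ℝ) ^ (n * (k + 1)) *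
        ∫ t in (a (k + 1) / 2 ^ (k + 1))..(a k / 2 ^ (k + 1)),
          ((1 / 2 ^ (k + 2)) / t) ^ ((n:ℝ) - ε) * t ^ (n - 1) ≤ M := by
  refine ⟨1, fun ε ⟨hε, hεn⟩ ↦ ?_⟩
  have hn1 : 1 ≤ n := by exact_mod_cast (show (1 : ℝ) ≤ n by linarith)
  have htel : HasSum (fun k ↦ a k ^ ε - a (k + 1) ^ ε) 1 := by
    have hlim : Tendsto (fun k ↦ a k ^ ε) atTop (𝓝 0) := by
      simpa [Real.zero_rpow hε.ne'] using halim.rpow_const (Or.inr hε.le)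
    simpa [ha0] using Antitone.hasSum_sub_succ
      (fun i j hij ↦ Real.rpow_le_rpow (hpos j).le (hanti.antitone hij) hε.le) hlim
  rw [tsum_congr fun k ↦ shell_integral_eq k hn1 hε (hpos (k + 1)) (hpos k),
    (htel.mul_left _).tsum_eq, mul_one, mul_div_cancel₀ _ hε.ne']
  exact Real.rpow_le_one_of_one_le_of_nonpos one_le_two (by linarith)

theorem stmt19 (n : ℕ) (hn : 2 ≤ n)
    (a : ℕ → ℝ) (hpos : ∀ k, 0 < a k) (ha0 : a 0 = 1)
    (hanti : StrictAnti a) (halim : Tendsto a atTop (nhds 0)) :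
    ∃ M : ℝ, ∀ ε ∈ Ioc (0:ℝ) ((n:ℝ) - 1),
      ε * ∑' k : ℕ, (2:ℝ) ^ (n * (k + 1)) *
        ∫ t in (a (k + 1) / 2 ^ (k + 1))..(a k / 2 ^ (k + 1)),
          ((1 / 2 ^ (k + 2)) / t) ^ ((n:ℝ) - ε) * t ^ (n - 1) ≤ M :=
  stmt19_general n a hpos ha0 hanti halim
end
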